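/- arXiv:math/9705207 — 3 statements merged into one kernel-verified Lean document; each statement's English description precedes it below -/
import Mathlib

section
/- Let G₁ and G₂ be groups with asynchronous combings L₁ over X₁ and L₂ over X₂. Then the concatenation L₁L₂ = {vw : v ∈ L₁, w ∈ L₂} is an asynchronous combing for the direct product G₁ × G₂ over the generating set X₁ ∪ X₂ (with X₁ generating G₁ × {e} and X₂ generating {e} × G₂). Moreover, if L₁ and L₂ are bijective then L₁L₂ is bijective. -/
/-- The group element represented by a word. -/
def evalW {X G : Type*} [Group G] (π : X → G) (w : List X) : G := (w.map π).prod

/-- The group element represented by the length-`t` prefix of a word. -/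
def evalP {X G : Type*} [Group G] (π : X → G) (w : List X) (t : ℕ) : G :=
  ((w.take t).map π).prod

/-- `g` and `h` are at word-metric distance at most `K` (w.r.t. the generators `π x`). -/
def WDistLE {X G : Type*} [Group G] (π : X → G) (K : ℕ) (g h : G) : Prop :=
  ∃ l : List X, l.length ≤ K ∧ g * (l.map π).prod = h

/-- `v` and `w` synchronously `K`-fellow travel. -/
def SyncFT {X G : Type*} [Group G] (π : X → G) (K : ℕ) (v w : List X) : Prop :=
  ∀ t : ℕ, WDistLE π K (evalP π v t) (evalP π w t)

/-- `v` and `w` asynchronously `K`-fellow travel, via a monotone reparametrization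
mapping `[0, |v|]` onto `[0, |w|]`. -/
def AsyncFT {X G : Type*} [Group G] (π : X → G) (K : ℕ) (v w : List X) : Prop :=
  ∃ h : ℕ → ℕ, Monotone h ∧ h 0 = 0 ∧ h v.length = w.length ∧
    ∀ t : ℕ, WDistLE π K (evalP π v t) (evalP π w (h t))

/-- The generating set is inverse-closed. -/
def InvClosed {X G : Type*} [Group G] (π : X → G) : Prop :=
  ∀ x, ∃ x', π x' = (π x)⁻¹

/-- `L` is a language for `G`: it contains a representative of every element. -/
def IsLanguageFor {X G : Type*} [Group G] (π : X → G) (L : Set (List X)) : Prop :=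
  ∀ g : G, ∃ w ∈ L, evalW π w = g

/-- `L` contains exactly one representative of every element. -/
def IsBijectiveLang {X G : Type*} [Group G] (π : X → G) (L : Set (List X)) : Prop :=
  ∀ g : G, ∃! w, w ∈ L ∧ evalW π w = g

/-- The pairs of words for which a combing requires fellow travelling:
`w` represents `v`, or `v` times a generator. -/
def CombRel {X G : Type*} [Group G] (π : X → G) (v w : List X) : Prop :=
  evalW π w = evalW π v ∨ ∃ x, evalW π w = evalW π v * π x

/-- `L` is a synchronous combing with fellow traveller constant `K`. -/
def IsSyncCombing {X G : Type*} [Group G] (π : X → G) (L : Set (List X)) (K : ℕ) : Prop :=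
  IsLanguageFor π L ∧ ∀ v ∈ L, ∀ w ∈ L, CombRel π v w → SyncFT π K v w

/-- `L` is an asynchronous combing with fellow traveller constant `K`. -/
def IsAsyncCombing {X G : Type*} [Group G] (π : X → G) (L : Set (List X)) (K : ℕ) : Prop :=
  IsLanguageFor π L ∧ ∀ v ∈ L, ∀ w ∈ L, CombRel π v w → AsyncFT π K v w

/-!
Along a concatenated word `v w` the path in `G₁ × G₂` first travels in `G₁ × {e}` along `v` and
then in `{eval v} × G₂` along `w`. Two such words fellow travel by following the reparametrization
of `L₁` on the first block and that of `L₂` on the second; in the second block the first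
coordinates `eval v` and `eval v'` differ by at most one generator, so the constant `max K₁ (1 + K₂)`
works. Representatives of a pair are exactly concatenations of representatives of its coordinates,
which gives bijectivity.
-/

section Words

variable {X G : Type*} [Group G] (π : X → G)

lemma evalW_append (u u' : List X) : evalW π (u ++ u') = evalW π u * evalW π u' := by
  simp only [evalW, List.map_append, List.prod_append]

lemma evalP_append_of_le {u : List X} (u' : List X) {t : ℕ} (ht : t ≤ u.length) :
    evalP π (u ++ u') t = evalP π u t := by
  simp only [evalP, List.take_append, Nat.sub_eq_zero_of_le ht, List.take_zero, List.append_nil]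

lemma evalP_append_of_ge {u : List X} (u' : List X) {t : ℕ} (ht : u.length ≤ t) :
    evalP π (u ++ u') t = evalW π u * evalP π u' (t - u.length) := by
  simp only [evalP, evalW, List.take_append, List.take_of_length_le ht, List.map_append,
    List.prod_append]

lemma WDistLE.refl (g : G) : WDistLE π 0 g g :=
  ⟨[], le_rfl, by simp⟩

variable {π}

lemma WDistLE.mono {K K' : ℕ} {g h : G} (hd : WDistLE π K g h) (hK : K ≤ K') :
    WDistLE π K' g h :=
  let ⟨l, hl, he⟩ := hd
  ⟨l, hl.trans hK, he⟩

lemma CombRel.wDistLE_one {v w : List X} (hvw : CombRel π v w) :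
    WDistLE π 1 (evalW π v) (evalW π w) := by
  rcases hvw with heq | ⟨x, hx⟩
  · exact ⟨[], zero_le_one, by rw [List.map_nil, List.prod_nil, mul_one, heq]⟩
  · exact ⟨[x], le_rfl, by simp [hx]⟩

end Words

def appendReparam (h₁ h₂ : ℕ → ℕ) (m m' : ℕ) (t : ℕ) : ℕ :=
  if t ≤ m then h₁ t else m' + h₂ (t - m)

section Reparam

variable {h₁ h₂ : ℕ → ℕ} {m m' : ℕ}

lemma appendReparam_of_le {t : ℕ} (ht : t ≤ m) : appendReparam h₁ h₂ m m' t = h₁ t :=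
  if_pos ht

lemma appendReparam_of_lt {t : ℕ} (ht : m < t) :
    appendReparam h₁ h₂ m m' t = m' + h₂ (t - m) :=
  if_neg (Nat.not_le.mpr ht)

lemma appendReparam_add (hm : h₁ m = m') (h₂0 : h₂ 0 = 0) (n : ℕ) :
    appendReparam h₁ h₂ m m' (m + n) = m' + h₂ n := by
  rcases Nat.eq_zero_or_pos n with rfl | hn
  · rw [Nat.add_zero, appendReparam_of_le le_rfl, h₂0, hm, Nat.add_zero]
  · rw [appendReparam_of_lt (by omega), Nat.add_sub_cancel_left]

lemma monotone_appendReparam (hmono₁ : Monotone h₁) (hmono₂ : Monotone h₂) (hm : h₁ m = m') :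
    Monotone (appendReparam h₁ h₂ m m') := by
  intro a b hab
  unfold appendReparam
  split_ifs with ha hb hb
  · exact hmono₁ hab
  · exact (hm ▸ hmono₁ ha).trans (Nat.le_add_right _ _)
  · omega
  · exact Nat.add_le_add_left (hmono₂ (Nat.sub_le_sub_right hab m)) m'

end Reparam

section Product

variable {X₁ X₂ G₁ G₂ : Type*} [Group G₁] [Group G₂] (π₁ : X₁ → G₁) (π₂ : X₂ → G₂)

def prodGen : X₁ ⊕ X₂ → G₁ × G₂ :=
  Sum.elim (fun x => ((π₁ x, 1) : G₁ × G₂)) (fun y => ((1, π₂ y) : G₁ × G₂))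

def prodLang (L₁ : Set (List X₁)) (L₂ : Set (List X₂)) : Set (List (X₁ ⊕ X₂)) :=
  {u | ∃ v ∈ L₁, ∃ w ∈ L₂, u = v.map Sum.inl ++ w.map Sum.inr}

lemma evalW_prodGen_map_inl (v : List X₁) :
    evalW (prodGen π₁ π₂) (v.map Sum.inl) = (evalW π₁ v, 1) := by
  simpa [evalW, prodGen, Function.comp_def] using
    (map_list_prod (MonoidHom.inl G₁ G₂) (v.map π₁)).symm

lemma evalW_prodGen_map_inr (w : List X₂) :
    evalW (prodGen π₁ π₂) (w.map Sum.inr) = (1, evalW π₂ w) := by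
  simpa [evalW, prodGen, Function.comp_def] using
    (map_list_prod (MonoidHom.inr G₁ G₂) (w.map π₂)).symm

lemma evalW_prodGen_append (v : List X₁) (w : List X₂) :
    evalW (prodGen π₁ π₂) (v.map Sum.inl ++ w.map Sum.inr) = (evalW π₁ v, evalW π₂ w) := by
  rw [evalW_append, evalW_prodGen_map_inl, evalW_prodGen_map_inr, Prod.mk_mul_mk, mul_one,
    one_mul]

lemma evalP_prodGen_append_of_le {v : List X₁} (w : List X₂) {t : ℕ} (ht : t ≤ v.length) :
    evalP (prodGen π₁ π₂) (v.map Sum.inl ++ w.map Sum.inr) t = (evalP π₁ v t, 1) := by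
  rw [evalP_append_of_le _ _ (by simpa using ht), evalP, ← List.map_take]
  exact evalW_prodGen_map_inl π₁ π₂ _

lemma evalP_prodGen_append_of_ge {v : List X₁} (w : List X₂) {t : ℕ} (ht : v.length ≤ t) :
    evalP (prodGen π₁ π₂) (v.map Sum.inl ++ w.map Sum.inr) t =
      (evalW π₁ v, evalP π₂ w (t - v.length)) := by
  rw [evalP_append_of_ge _ _ (by simpa using ht), List.length_map, evalW_prodGen_map_inl,
    evalP, ← List.map_take, ← evalW, evalW_prodGen_map_inr, Prod.mk_mul_mk, mul_one, one_mul]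
  rfl

variable {π₁ π₂}

lemma WDistLE.prod {K₁ K₂ : ℕ} {a a' : G₁} {b b' : G₂} (ha : WDistLE π₁ K₁ a a')
    (hb : WDistLE π₂ K₂ b b') : WDistLE (prodGen π₁ π₂) (K₁ + K₂) (a, b) (a', b') := by
  obtain ⟨l₁, hl₁, rfl⟩ := ha
  obtain ⟨l₂, hl₂, rfl⟩ := hb
  refine ⟨l₁.map Sum.inl ++ l₂.map Sum.inr, by simp; omega, ?_⟩
  rw [← evalW, evalW_prodGen_append, Prod.mk_mul_mk]
  rfl

lemma CombRel.of_prodGen_append {v v' : List X₁} {w w' : List X₂}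
    (h : CombRel (prodGen π₁ π₂) (v.map Sum.inl ++ w.map Sum.inr)
      (v'.map Sum.inl ++ w'.map Sum.inr)) :
    CombRel π₁ v v' ∧ CombRel π₂ w w' := by
  simp only [CombRel, evalW_prodGen_append, Sum.exists] at h
  simp only [prodGen, Sum.elim_inl, Sum.elim_inr, Prod.mk_mul_mk, mul_one, Prod.ext_iff] at h
  rcases h with ⟨h₁, h₂⟩ | ⟨x, h₁, h₂⟩ | ⟨y, h₁, h₂⟩
  · exact ⟨Or.inl h₁, Or.inl h₂⟩
  · exact ⟨Or.inr ⟨x, h₁⟩, Or.inl h₂⟩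
  · exact ⟨Or.inl h₁, Or.inr ⟨y, h₂⟩⟩

lemma AsyncFT.prodGen_append {K₁ K₂ D : ℕ} {v v' : List X₁} {w w' : List X₂}
    (hv : AsyncFT π₁ K₁ v v') (hw : AsyncFT π₂ K₂ w w')
    (hD : WDistLE π₁ D (evalW π₁ v) (evalW π₁ v')) :
    AsyncFT (prodGen π₁ π₂) (max K₁ (D + K₂))
      (v.map Sum.inl ++ w.map Sum.inr) (v'.map Sum.inl ++ w'.map Sum.inr) := by
  obtain ⟨h₁, hmono₁, h₁0, h₁len, hd₁⟩ := hv
  obtain ⟨h₂, hmono₂, h₂0, h₂len, hd₂⟩ := hw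
  refine ⟨appendReparam h₁ h₂ v.length v'.length, monotone_appendReparam hmono₁ hmono₂ h₁len,
    by rw [appendReparam_of_le (Nat.zero_le _), h₁0], ?_, fun t => ?_⟩
  · simp only [List.length_append, List.length_map, appendReparam_add h₁len h₂0, h₂len]
  rcases le_or_gt t v.length with ht | ht
  · rw [appendReparam_of_le ht, evalP_prodGen_append_of_le π₁ π₂ w ht,
      evalP_prodGen_append_of_le π₁ π₂ w' (h₁len ▸ hmono₁ ht)]
    exact ((hd₁ t).prod (WDistLE.refl π₂ 1)).mono (by omega)
  · rw [appendReparam_of_lt ht, evalP_prodGen_append_of_ge π₁ π₂ w ht.le,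
      evalP_prodGen_append_of_ge π₁ π₂ w' (Nat.le_add_right _ _), Nat.add_sub_cancel_left]
    exact (hD.prod (hd₂ _)).mono (le_max_right _ _)

lemma IsLanguageFor.prod {L₁ : Set (List X₁)} {L₂ : Set (List X₂)} (h₁ : IsLanguageFor π₁ L₁)
    (h₂ : IsLanguageFor π₂ L₂) : IsLanguageFor (prodGen π₁ π₂) (prodLang L₁ L₂) := by
  rintro ⟨g₁, g₂⟩
  obtain ⟨v, hv, rfl⟩ := h₁ g₁
  obtain ⟨w, hw, rfl⟩ := h₂ g₂
  exact ⟨_, ⟨v, hv, w, hw, rfl⟩, evalW_prodGen_append π₁ π₂ v w⟩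

lemma IsBijectiveLang.prod {L₁ : Set (List X₁)} {L₂ : Set (List X₂)}
    (h₁ : IsBijectiveLang π₁ L₁) (h₂ : IsBijectiveLang π₂ L₂) :
    IsBijectiveLang (prodGen π₁ π₂) (prodLang L₁ L₂) := by
  rintro ⟨g₁, g₂⟩
  obtain ⟨v, ⟨hv, rfl⟩, hv_uniq⟩ := h₁ g₁
  obtain ⟨w, ⟨hw, rfl⟩, hw_uniq⟩ := h₂ g₂
  refine ⟨_, ⟨⟨v, hv, w, hw, rfl⟩, evalW_prodGen_append π₁ π₂ v w⟩, ?_⟩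
  rintro _ ⟨⟨v', hv', w', hw', rfl⟩, he⟩
  rw [evalW_prodGen_append, Prod.ext_iff] at he
  rw [hv_uniq v' ⟨hv', he.1⟩, hw_uniq w' ⟨hw', he.2⟩]

lemma IsAsyncCombing.prod {L₁ : Set (List X₁)} {L₂ : Set (List X₂)} {K₁ K₂ : ℕ}
    (h₁ : IsAsyncCombing π₁ L₁ K₁) (h₂ : IsAsyncCombing π₂ L₂ K₂) :
    IsAsyncCombing (prodGen π₁ π₂) (prodLang L₁ L₂) (max K₁ (1 + K₂)) := by
  refine ⟨h₁.1.prod h₂.1, ?_⟩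
  rintro _ ⟨v, hv, w, hw, rfl⟩ _ ⟨v', hv', w', hw', rfl⟩ hrel
  obtain ⟨hc₁, hc₂⟩ := hrel.of_prodGen_append
  exact (h₁.2 v hv v' hv' hc₁).prodGen_append (h₂.2 w hw w' hw' hc₂) hc₁.wDistLE_one

end Product

theorem stmt4_general {X₁ X₂ G₁ G₂ : Type*} [Group G₁] [Group G₂]
    (π₁ : X₁ → G₁) (π₂ : X₂ → G₂)
    (L₁ : Set (List X₁)) (L₂ : Set (List X₂)) (K₁ K₂ : ℕ)
    (hL₁ : IsAsyncCombing π₁ L₁ K₁) (hL₂ : IsAsyncCombing π₂ L₂ K₂) :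
    ∃ K : ℕ,
      IsAsyncCombing
        (Sum.elim (fun x => ((π₁ x, 1) : G₁ × G₂)) (fun y => ((1, π₂ y) : G₁ × G₂)))
        {u : List (X₁ ⊕ X₂) | ∃ v ∈ L₁, ∃ w ∈ L₂, u = v.map Sum.inl ++ w.map Sum.inr} K ∧
      (IsBijectiveLang π₁ L₁ → IsBijectiveLang π₂ L₂ →
        IsBijectiveLang
          (Sum.elim (fun x => ((π₁ x, 1) : G₁ × G₂)) (fun y => ((1, π₂ y) : G₁ × G₂)))
          {u : List (X₁ ⊕ X₂) | ∃ v ∈ L₁, ∃ w ∈ L₂, u = v.map Sum.inl ++ w.map Sum.inr}) :=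
  ⟨_, hL₁.prod hL₂, fun hb₁ hb₂ => hb₁.prod hb₂⟩

/-- the concatenation of asynchronous combings of `G₁` and `G₂` is an
asynchronous combing of `G₁ × G₂`, bijective if both factors are. -/
theorem stmt4 {X₁ X₂ G₁ G₂ : Type*} [Group G₁] [Group G₂] [Fintype X₁] [Fintype X₂]
    (π₁ : X₁ → G₁) (π₂ : X₂ → G₂) (hinv₁ : InvClosed π₁) (hinv₂ : InvClosed π₂)
    (L₁ : Set (List X₁)) (L₂ : Set (List X₂)) (K₁ K₂ : ℕ)
    (hL₁ : IsAsyncCombing π₁ L₁ K₁) (hL₂ : IsAsyncCombing π₂ L₂ K₂) :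
    ∃ K : ℕ,
      IsAsyncCombing
        (Sum.elim (fun x => ((π₁ x, 1) : G₁ × G₂)) (fun y => ((1, π₂ y) : G₁ × G₂)))
        {u : List (X₁ ⊕ X₂) | ∃ v ∈ L₁, ∃ w ∈ L₂, u = v.map Sum.inl ++ w.map Sum.inr} K ∧
      (IsBijectiveLang π₁ L₁ → IsBijectiveLang π₂ L₂ →
        IsBijectiveLang
          (Sum.elim (fun x => ((π₁ x, 1) : G₁ × G₂)) (fun y => ((1, π₂ y) : G₁ × G₂)))
          {u : List (X₁ ⊕ X₂) | ∃ v ∈ L₁, ∃ w ∈ L₂, u = v.map Sum.inl ++ w.map Sum.inr}) :=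
  stmt4_general π₁ π₂ L₁ L₂ K₁ K₂ hL₁ hL₂
end

section
/- Suppose G is a group with finite generating sets X and Y, L is a language for G over X, and φ: L → Y* is a map such that for constants λ, C > 0 and all v ∈ L, d_Y(φ(v)(t), v(λt)) < C for all t. If L satisfies the synchronous K-fellow traveller property for pairs v, w with w =_G vx (x ∈ X ∪ {e}), then φ(L) satisfies the synchronous fellow traveller property with constant 2C + MK, where M is the maximum length of fixed words over Y representing elements of X and over X representing elements of Y. -/
lemma exists_inv_word {Y G : Type*} [Group G] (π : Y → G) (hinv : InvClosed π)
    (l : List Y) : ∃ l' : List Y, l'.length = l.length ∧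
      (l'.map π).prod = ((l.map π).prod)⁻¹ := by
  induction l with
  | nil => exact ⟨[], rfl, by simp⟩
  | cons y l ih =>
    obtain ⟨l', hlen, hprod⟩ := ih
    obtain ⟨y', hy'⟩ := hinv y
    refine ⟨l' ++ [y'], by simp [hlen], ?_⟩
    simp [hprod, hy', mul_comm]

lemma exists_translated_word {X Y G : Type*} [Group G] (πX : X → G) (πY : Y → G)
    (M : ℕ) (hMX : ∀ x : X, ∃ u : List Y, u.length ≤ M ∧ evalW πY u = πX x)
    (m : List X) : ∃ u : List Y, u.length ≤ M * m.length ∧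
      (u.map πY).prod = (m.map πX).prod := by
  induction m with
  | nil => exact ⟨[], by simp, by simp⟩
  | cons x m ih =>
    obtain ⟨u, hlen, hprod⟩ := ih
    obtain ⟨ux, hux, huxp⟩ := hMX x
    refine ⟨ux ++ u, ?_, ?_⟩
    · simp only [List.length_append, List.length_cons, Nat.mul_succ]
      omega
    · simp [evalW] at huxp
      simp [hprod, huxp]

/-- (Lemma 5.1, synchronous case) if `φ : L → Y*` satisfies
`d_Y(φ(v)(t), v(λt)) < C` and `L` satisfies the synchronous `K`-fellow traveller
condition over `X`, then `φ(L)` satisfies it over `Y` with constant `2C + MK`. -/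
theorem stmt7 {X Y G : Type*} [Group G] [Fintype X] [Fintype Y]
    (πX : X → G) (πY : Y → G) (hinvX : InvClosed πX) (hinvY : InvClosed πY)
    (L : Set (List X)) (φ : List X → List Y) (lam C M K : ℕ)
    (hlam : 0 < lam) (hC : 0 < C)
    (hMX : ∀ x : X, ∃ u : List Y, u.length ≤ M ∧ evalW πY u = πX x)
    (hMY : ∀ y : Y, ∃ u : List X, u.length ≤ M ∧ evalW πX u = πY y)
    (hφ : ∀ v ∈ L, ∀ t : ℕ,
      ∃ l : List Y, l.length < C ∧ evalP πY (φ v) t * (l.map πY).prod = evalP πX v (lam * t))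
    (hL : ∀ v ∈ L, ∀ w ∈ L, CombRel πX v w → SyncFT πX K v w) :
    ∀ v ∈ L, ∀ w ∈ L, CombRel πX v w → SyncFT πY (2 * C + M * K) (φ v) (φ w) := by
  intro v hv w hw hrel t
  obtain ⟨l1, hl1, hl1p⟩ := hφ v hv t
  obtain ⟨l2, hl2, hl2p⟩ := hφ w hw t
  obtain ⟨m, hm, hmp⟩ := hL v hv w hw hrel (lam * t)
  obtain ⟨u, hu, hup⟩ := exists_translated_word πX πY M hMX m
  obtain ⟨l2', hl2', hl2'p⟩ := exists_inv_word πY hinvY l2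
  refine ⟨l1 ++ u ++ l2', ?_, ?_⟩
  · have : u.length ≤ M * K := le_trans hu (Nat.mul_le_mul_left M hm)
    simp only [List.length_append]
    omega
  · simp only [List.map_append, List.prod_append, hl2'p, hup]
    rw [← mul_assoc, ← mul_assoc, hl1p, hmp, ← hl2p]
    simp [mul_assoc]
end

section
/- Let L be a synchronous combing of a group G over X with constant K, and suppose L is a regular language. Let ⪯ denote the shortlex order on X*. Then the language L₀ = {v ∈ L : there is no w ∈ L with w ≺ v and w =_G v} is a bijective regular synchronous combing of G. In particular, every automatic group has a bijective regular synchronous combing. -/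
/-- Shortlex order on words: shorter, or same length and lexicographically smaller. -/
def ShortLexLt {X : Type*} [LinearOrder X] (w v : List X) : Prop :=
  w.length < v.length ∨ (w.length = v.length ∧ List.Lex (· < ·) w v)

/-!
Two words of `L` representing the same element fellow travel, so a word of `L` fails to be
shortlex-least among its representatives exactly when some shortlex-smaller word of `L` with the
same value `K`-fellow travels it. A nondeterministic automaton reading `v` can guess such a
word `w` letter by letter: it only has to remember the state of an automaton for `L` on `w`,
the difference `(evalW v)⁻¹ * evalW w` of the prefixes read so far, which stays in the finite
ball of radius `K`, and the outcome of the lexicographic comparison so far. Removing this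
regular language from `L` leaves a regular language; it is a subset of a combing containing
exactly one representative of each element, hence a bijective combing.
-/

namespace List

variable {α : Type*} [LinearOrder α]

theorem compare_eq_lt_iff_lex {l m : List α} : compare l m = .lt ↔ Lex (· < ·) l m := by
  induction l generalizing m with
  | nil => cases m <;> simp
  | cons p l ih =>
    cases m with
    | nil => simp
    | cons q m =>
      rw [List.compare_cons_cons, Ordering.then_eq_lt, compare_lt_iff_lt, compare_eq_iff_eq, ih,
        cons_lex_cons_iff]

theorem compare_append_of_length_eq {a b : List α} (h : a.length = b.length) (c d : List α) :
    compare (a ++ c) (b ++ d) = (compare a b).then (compare c d) := by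
  induction a generalizing b with
  | nil => rw [eq_nil_of_length_eq_zero h.symm]; rfl
  | cons p a ih =>
    obtain ⟨q, b, rfl⟩ := exists_cons_of_length_eq_add_one h.symm
    simp only [cons_append, List.compare_cons_cons, ih (Nat.succ_injective h), Ordering.then_assoc]

end List

section ShortLex

variable {X : Type*} [LinearOrder X]

theorem shortLexLt_iff_toLex_lt {w v : List X} :
    ShortLexLt w v ↔ toLex (w.length, w) < toLex (v.length, v) := by
  rw [Prod.Lex.toLex_lt_toLex]
  rfl

theorem ShortLexLt.length_le {w v : List X} (h : ShortLexLt w v) : w.length ≤ v.length :=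
  h.elim le_of_lt fun h => h.1.le

theorem eq_of_not_shortLexLt_of_not_shortLexLt {w v : List X} (hwv : ¬ShortLexLt w v)
    (hvw : ¬ShortLexLt v w) : w = v := by
  rw [shortLexLt_iff_toLex_lt, not_lt] at hwv hvw
  exact congrArg (fun p => (ofLex p).2) (le_antisymm hvw hwv)

theorem exists_shortLex_minimal [Finite X] {S : Set (List X)} (hS : S.Nonempty) :
    ∃ w ∈ S, ∀ u ∈ S, ¬ShortLexLt u w := by
  obtain ⟨v, hv⟩ := hS
  have hfin : {u ∈ S | u.length ≤ v.length}.Finite :=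
    (List.finite_length_le X v.length).subset fun _ hu => hu.2
  obtain ⟨w, ⟨hwS, hwv⟩, hmin⟩ :=
    Set.exists_min_image _ (fun u => toLex (u.length, u)) hfin ⟨v, hv, le_rfl⟩
  refine ⟨w, hwS, fun u hu hlt => ?_⟩
  exact (hmin u ⟨hu, hlt.length_le.trans hwv⟩).not_gt (shortLexLt_iff_toLex_lt.mp hlt)

end ShortLex

section Representatives

variable {X G : Type*} [Group G] [LinearOrder X] {π : X → G} {L : Set (List X)}

def shortLexReps (π : X → G) (L : Set (List X)) : Set (List X) :=
  {v ∈ L | ¬∃ w ∈ L, ShortLexLt w v ∧ evalW π w = evalW π v}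

theorem shortLexReps_subset : shortLexReps π L ⊆ L := Set.sep_subset _ _

theorem injOn_evalW_shortLexReps : Set.InjOn (evalW π) (shortLexReps π L) := by
  intro u ⟨huL, hu⟩ v ⟨hvL, hv⟩ huv
  exact eq_of_not_shortLexLt_of_not_shortLexLt (fun h => hv ⟨u, huL, h, huv⟩)
    (fun h => hu ⟨v, hvL, h, huv.symm⟩)

theorem isLanguageFor_shortLexReps [Finite X] (hL : IsLanguageFor π L) :
    IsLanguageFor π (shortLexReps π L) := by
  intro g
  obtain ⟨w, ⟨hwL, hwg⟩, hmin⟩ :=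
    exists_shortLex_minimal (S := {w ∈ L | evalW π w = g}) (hL g)
  exact ⟨w, ⟨hwL, fun ⟨u, huL, hlt, hu⟩ => hmin u ⟨huL, hu.trans hwg⟩ hlt⟩, hwg⟩

theorem isBijectiveLang_shortLexReps [Finite X] (hL : IsLanguageFor π L) :
    IsBijectiveLang π (shortLexReps π L) := by
  intro g
  obtain ⟨w, hw, hwg⟩ := isLanguageFor_shortLexReps hL g
  exact ⟨w, ⟨hw, hwg⟩, fun u ⟨hu, hug⟩ =>
    injOn_evalW_shortLexReps hu hw (hug.trans hwg.symm)⟩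

end Representatives

theorem IsSyncCombing.mono {X G : Type*} [Group G] {π : X → G} {L L' : Set (List X)} {K : ℕ}
    (hL : IsSyncCombing π L K) (hL' : IsLanguageFor π L') (h : L' ⊆ L) :
    IsSyncCombing π L' K :=
  ⟨hL', fun v hv w hw => hL.2 v (h hv) w (h hw)⟩

section FellowTravel

variable {X G : Type*} [Group G] (π : X → G) (K : ℕ)

def wordBall : Set G := {g | WDistLE π K 1 g}

variable {π K}

theorem wDistLE_iff_inv_mul_mem_wordBall {g h : G} :
    WDistLE π K g h ↔ g⁻¹ * h ∈ wordBall π K := by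
  simp only [WDistLE, wordBall, Set.mem_ofPred_eq, one_mul, eq_inv_mul_iff_mul_eq]

theorem finite_wordBall [Finite X] : (wordBall π K).Finite :=
  ((List.finite_length_le X K).image fun l => (l.map π).prod).subset fun _ ⟨l, hl, hg⟩ =>
    ⟨l, hl, by rwa [one_mul] at hg⟩

theorem evalW_append_singleton (v : List X) (x : X) :
    evalW π (v ++ [x]) = evalW π v * π x := by
  simp [evalW]

theorem evalP_eq_evalW_take (w : List X) (t : ℕ) : evalP π w t = evalW π (w.take t) := rfl

theorem syncFT_nil : SyncFT π K [] [] :=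
  fun _ => ⟨[], Nat.zero_le K, mul_one _⟩

theorem syncFT_append_singleton_iff {v w : List X} {x : X} (hw : w.length ≤ v.length + 1) :
    SyncFT π K (v ++ [x]) w ↔
      SyncFT π K v (w.take v.length) ∧ WDistLE π K (evalW π (v ++ [x])) (evalW π w) := by
  simp only [SyncFT, evalP_eq_evalW_take, List.take_take]
  have hfull : ∀ t, v.length < t → (v ++ [x]).take t = v ++ [x] ∧ w.take t = w := fun t ht =>
    ⟨List.take_of_length_le (by simpa using ht), List.take_of_length_le (by omega)⟩
  constructor
  · intro h
    refine ⟨fun t => ?_, by simpa only [hfull _ (Nat.lt_succ_self _)] using h (v.length + 1)⟩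
    rw [List.take_eq_take_min, ← List.take_append_of_le_length (l₂ := [x]) (min_le_right _ _)]
    exact h _
  · rintro ⟨hv, hend⟩ t
    rcases le_or_gt t v.length with ht | ht
    · simpa only [List.take_append_of_le_length ht, min_eq_left ht] using hv t
    · simpa only [hfull t ht] using hend

end FellowTravel

section ReducibleWords

variable {X G : Type*} [Group G] [LinearOrder X] (π : X → G) (K : ℕ)

def shortLexReducible (L : Language X) : Language X :=
  {v | ∃ w ∈ L, ShortLexLt w v ∧ evalW π w = evalW π v ∧ SyncFT π K v w}

def lexStatus (w v : List X) : Option Ordering :=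
  if w.length < v.length then none else some (compare w v)

theorem lexStatus_append_singleton {w v : List X} (h : w.length = v.length) (y x : X) :
    lexStatus (w ++ [y]) (v ++ [x]) = (lexStatus w v).map (·.then (compare y x)) := by
  simp [lexStatus, h, List.compare_append_of_length_eq h, List.compare_cons_cons]

theorem shortLexLt_iff_lexStatus {w v : List X} (h : w.length ≤ v.length) :
    ShortLexLt w v ↔ lexStatus w v = none ∨ lexStatus w v = some .lt := by
  rcases h.lt_or_eq with h | h <;> simp [ShortLexLt, lexStatus, h, List.compare_eq_lt_iff_lex]

variable {σ : Type*} (A : DFA X σ)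

/-- Reading `v`, the automaton guesses `w` letter by letter. The first kind of transition is taken
once `w` has ended, the second appends the letter `y` to `w`. -/
def shortLexReducibleNFA : NFA X (σ × wordBall π K × Option Ordering) where
  step p x := {p' |
    (p'.1 = p.1 ∧ (p'.2.1 : G) = (π x)⁻¹ * p.2.1 ∧ p'.2.2 = none) ∨
    ∃ y, p.2.2.isSome ∧ p'.1 = A.step p.1 y ∧ (p'.2.1 : G) = (π x)⁻¹ * p.2.1 * π y ∧
      p'.2.2 = p.2.2.map (·.then (compare y x))}
  start := {p | p.1 = A.start ∧ (p.2.1 : G) = 1 ∧ p.2.2 = some .eq}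
  accept := {p | p.1 ∈ A.accept ∧ (p.2.1 : G) = 1 ∧ (p.2.2 = none ∨ p.2.2 = some .lt)}

variable {π K}

def IsRunState (v w : List X) (p : σ × wordBall π K × Option Ordering) : Prop :=
  p.1 = A.eval w ∧ (p.2.1 : G) = (evalW π v)⁻¹ * evalW π w ∧ p.2.2 = lexStatus w v

variable {A} {p p' : σ × wordBall π K × Option Ordering}

theorem IsRunState.exists_step {v w : List X} {x : X}
    (hp : IsRunState A v w p) (hw : w.length ≤ v.length) (hft : SyncFT π K v w)
    (hstep : p' ∈ (shortLexReducibleNFA π K A).step p x) :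
    ∃ w', w'.length ≤ v.length + 1 ∧ SyncFT π K (v ++ [x]) w' ∧
      IsRunState A (v ++ [x]) w' p' := by
  obtain ⟨hq, hd, hs⟩ := hp
  rcases hstep with ⟨hq', hd', hs'⟩ | ⟨y, hsome, hq', hd', hs'⟩
  · have hdiff : (p'.2.1 : G) = (evalW π (v ++ [x]))⁻¹ * evalW π w := by
      rw [hd', hd, evalW_append_singleton]; group
    refine ⟨w, by omega, (syncFT_append_singleton_iff (by omega)).mpr ⟨?_, ?_⟩,
      hq'.trans hq, hdiff, ?_⟩
    · rwa [List.take_of_length_le hw]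
    · exact wDistLE_iff_inv_mul_mem_wordBall.mpr (hdiff ▸ p'.2.1.2)
    · rw [hs', lexStatus, if_pos (by simp; omega)]
  · have hlen : w.length = v.length := by
      rw [hs, lexStatus] at hsome
      exact hw.antisymm (not_lt.mp fun h => by simp [h] at hsome)
    have hdiff : (p'.2.1 : G) = (evalW π (v ++ [x]))⁻¹ * evalW π (w ++ [y]) := by
      rw [hd', hd, evalW_append_singleton, evalW_append_singleton]; group
    refine ⟨w ++ [y], by simp [hlen],
      (syncFT_append_singleton_iff (by simp [hlen])).mpr ⟨?_, ?_⟩,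
      by rw [hq', hq, DFA.eval_append_singleton], hdiff, ?_⟩
    · rwa [List.take_left' hlen]
    · exact wDistLE_iff_inv_mul_mem_wordBall.mpr (hdiff ▸ p'.2.1.2)
    · rw [hs', hs, lexStatus_append_singleton hlen]

theorem IsRunState.exists_prev {v w : List X} {x : X}
    (hp' : IsRunState A (v ++ [x]) w p') (hw : w.length ≤ v.length + 1)
    (hft : SyncFT π K v (w.take v.length)) :
    ∃ p, IsRunState A v (w.take v.length) p ∧
      p' ∈ (shortLexReducibleNFA π K A).step p x := by
  obtain ⟨hq, hd, hs⟩ := hp'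
  generalize hw₀ : w.take v.length = w₀ at hft ⊢
  have hball : (evalW π v)⁻¹ * evalW π w₀ ∈ wordBall π K := by
    have := hft v.length
    rwa [evalP_eq_evalW_take, evalP_eq_evalW_take, List.take_length,
      List.take_of_length_le (hw₀ ▸ List.length_take_le _ _), wDistLE_iff_inv_mul_mem_wordBall]
      at this
  refine ⟨(A.eval w₀, ⟨_, hball⟩, lexStatus w₀ v), ⟨rfl, rfl, rfl⟩, ?_⟩
  rcases hw.lt_or_eq with hlt | heq
  · obtain rfl : w = w₀ := hw₀ ▸ (List.take_of_length_le (by omega)).symm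
    refine Or.inl ⟨hq, ?_, ?_⟩
    · rw [hd, evalW_append_singleton]; group
    · rw [hs, lexStatus, if_pos (by simpa using hlt)]
  · obtain ⟨u, y, rfl⟩ := (List.eq_nil_or_concat' w).resolve_left (by rintro rfl; simp at heq)
    have hlen : u.length = v.length := by simpa using heq
    obtain rfl : u = w₀ := hw₀ ▸ (List.take_left' hlen).symm
    refine Or.inr ⟨y, by simp [lexStatus, hlen], by rw [hq, DFA.eval_append_singleton], ?_, ?_⟩
    · rw [hd, evalW_append_singleton, evalW_append_singleton]; group
    · rw [hs, lexStatus_append_singleton hlen]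

theorem mem_eval_shortLexReducibleNFA_iff (v : List X) :
    p ∈ (shortLexReducibleNFA π K A).eval v ↔
      ∃ w, w.length ≤ v.length ∧ SyncFT π K v w ∧ IsRunState A v w p := by
  induction v using List.reverseRecOn generalizing p with
  | nil =>
    simp only [NFA.eval_nil, List.length_nil, Nat.le_zero, List.length_eq_zero_iff, exists_eq_left]
    exact ⟨fun ⟨hq, hd, hs⟩ => ⟨syncFT_nil, hq, by simp [hd, evalW], hs⟩,
      fun ⟨_, hq, hd, hs⟩ => ⟨hq, by simpa [evalW] using hd, hs⟩⟩
  | append_singleton v x ih =>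
    rw [NFA.eval_append_singleton, NFA.mem_stepSet]
    constructor
    · rintro ⟨p₀, hp₀, hstep⟩
      obtain ⟨w, hw, hft, hrun⟩ := ih.mp hp₀
      simpa using hrun.exists_step hw hft hstep
    · rintro ⟨w, hw, hft, hrun⟩
      rw [List.length_append, List.length_singleton] at hw
      obtain ⟨hft₀, -⟩ := (syncFT_append_singleton_iff hw).mp hft
      obtain ⟨p₀, hp₀, hstep⟩ := hrun.exists_prev hw hft₀
      exact ⟨p₀, ih.mpr ⟨_, List.length_take_le _ _, hft₀, hp₀⟩, hstep⟩

theorem mem_shortLexReducibleNFA_accepts_iff (v : List X) :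
    v ∈ (shortLexReducibleNFA π K A).accepts ↔ v ∈ shortLexReducible π K A.accepts := by
  simp only [NFA.accepts, shortLexReducible, mem_eval_shortLexReducibleNFA_iff]
  constructor
  · rintro ⟨p, ⟨hacc, hone, hst⟩, w, hw, hft, hq, hd, hs⟩
    exact ⟨w, (DFA.mem_accepts A).mpr (hq ▸ hacc),
      (shortLexLt_iff_lexStatus hw).mpr (hs ▸ hst),
      (inv_mul_eq_one.mp (hd ▸ hone)).symm, hft⟩
  · rintro ⟨w, hwA, hlt, heq, hft⟩
    exact ⟨(A.eval w, ⟨1, ⟨[], Nat.zero_le K, mul_one 1⟩⟩, lexStatus w v),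
      ⟨hwA, rfl, (shortLexLt_iff_lexStatus hlt.length_le).mp hlt⟩,
      w, hlt.length_le, hft, rfl, by simp [heq], rfl⟩

variable (π K) in
theorem isRegular_shortLexReducible [Finite X] {L : Language X} (hL : L.IsRegular) :
    (shortLexReducible π K L).IsRegular := by
  classical
  obtain ⟨σ, _, A, rfl⟩ := hL
  have : Finite (wordBall π K) := finite_wordBall.to_subtype
  refine Language.isRegular_iff.mpr
    ⟨_, Fintype.ofFinite _, (shortLexReducibleNFA π K A).toDFA, ?_⟩
  ext v
  rw [NFA.toDFA_correct, mem_shortLexReducibleNFA_accepts_iff]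

end ReducibleWords

theorem IsSyncCombing.shortLexReps_eq {X G : Type*} [Group G] [LinearOrder X] {π : X → G}
    {L : Set (List X)} {K : ℕ} (hL : IsSyncCombing π L K) :
    (shortLexReps π L : Language X) = (L : Language X) ⊓ (shortLexReducible π K L)ᶜ := by
  ext v
  refine and_congr_right fun hv => not_congr ⟨fun ⟨w, hw, hlt, heq⟩ => ?_, ?_⟩
  · exact ⟨w, hw, hlt, heq, hL.2 v hv w hw (Or.inl heq)⟩
  · exact fun ⟨w, hw, hlt, heq, _⟩ => ⟨w, hw, hlt, heq⟩

theorem stmt13_general {X G : Type*} [Group G] [Fintype X] [LinearOrder X]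
    (π : X → G) (L : Set (List X)) (K : ℕ)
    (hreg : Language.IsRegular (L : Language X)) (hL : IsSyncCombing π L K) :
    Language.IsRegular
      ({v ∈ L | ¬ ∃ w ∈ L, ShortLexLt w v ∧ evalW π w = evalW π v} : Language X) ∧
    IsBijectiveLang π {v ∈ L | ¬ ∃ w ∈ L, ShortLexLt w v ∧ evalW π w = evalW π v} ∧
    IsSyncCombing π {v ∈ L | ¬ ∃ w ∈ L, ShortLexLt w v ∧ evalW π w = evalW π v} K := by
  refine ⟨?_, isBijectiveLang_shortLexReps hL.1,
    hL.mono (isLanguageFor_shortLexReps hL.1) shortLexReps_subset⟩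
  change Language.IsRegular (shortLexReps π L : Language X)
  rw [hL.shortLexReps_eq]
  exact hreg.inf (isRegular_shortLexReducible π K hreg).compl

/-- if `L` is a regular synchronous combing of `G` with constant `K`, the
set of shortlex-least representatives in `L` is a bijective, regular, synchronous
combing of `G`. -/
theorem stmt13 {X G : Type*} [Group G] [Fintype X] [LinearOrder X]
    (π : X → G) (hinv : InvClosed π) (L : Set (List X)) (K : ℕ)
    (hreg : Language.IsRegular (L : Language X)) (hL : IsSyncCombing π L K) :
    Language.IsRegular
      ({v ∈ L | ¬ ∃ w ∈ L, ShortLexLt w v ∧ evalW π w = evalW π v} : Language X) ∧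
    IsBijectiveLang π {v ∈ L | ¬ ∃ w ∈ L, ShortLexLt w v ∧ evalW π w = evalW π v} ∧
    IsSyncCombing π {v ∈ L | ¬ ∃ w ∈ L, ShortLexLt w v ∧ evalW π w = evalW π v} K :=
  stmt13_general π L K hreg hL
end
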